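/- arXiv:2504.09494 — 5 statements merged into one kernel-verified Lean document; each statement's English description precedes it below -/
import Mathlib

section
/- Let K be a convex set and f, g : K → ℝ with g > 0 on K. Then on the domain where all three quantities are defined, the harmonic concavity functions satisfy HC_{f−g} ≥ HC_f − HC_g. In particular, if HC_g ≤ 0 everywhere on its domain (for example g constant), then HC_{f−g} ≥ HC_f. -/
open Classical in
/-- Harmonic concavity function of `h`. -/
noncomputable def HCfun {n : ℕ} (h : (Fin n → ℝ) → ℝ) (x₁ x₃ : Fin n → ℝ) (l : ℝ) : ℝ :=
  if 0 < l * h x₁ + (1 - l) * h x₃ then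
    h ((1 - l) • x₁ + l • x₃) - h x₁ * h x₃ / (l * h x₁ + (1 - l) * h x₃)
  else h ((1 - l) • x₁ + l • x₃)

/-- The domain of the harmonic concavity function of `h`. -/
def HCdom {n : ℕ} (h : (Fin n → ℝ) → ℝ) (x₁ x₃ : Fin n → ℝ) (l : ℝ) : Prop :=
  0 < l * h x₁ + (1 - l) * h x₃ ∨ (h x₁ = 0 ∧ h x₃ = 0)

/-! In `HC_{f-g} - HC_f + HC_g` the values at the middle point cancel, and the three remaining
terms `h₁ h₃ / D_h`, with `D_h = l h₁ + (1 - l) h₃`, combine into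
`l (1 - l) (f₁ g₃ - f₃ g₁)² / (D_f D_g D_{f-g})`, which is nonnegative once the three `D`s are
positive; `g > 0` makes `D_g` positive, and then `D_f = D_{f-g} + D_g`. In the degenerate case
`f = g` at both end points the two sides are equal. -/

section WeightedMean

variable {𝕜 : Type*} [Field 𝕜]

theorem weighted_div_sub_weighted_div_sub_weighted_div (a b c d l : 𝕜)
    (hab : l * a + (1 - l) * b ≠ 0) (hcd : l * c + (1 - l) * d ≠ 0)
    (h : l * (a - c) + (1 - l) * (b - d) ≠ 0) :
    a * b / (l * a + (1 - l) * b) - c * d / (l * c + (1 - l) * d)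
        - (a - c) * (b - d) / (l * (a - c) + (1 - l) * (b - d)) =
      l * (1 - l) * (a * d - b * c) ^ 2 /
        ((l * a + (1 - l) * b) * (l * c + (1 - l) * d) * (l * (a - c) + (1 - l) * (b - d))) := by
  rw [div_sub_div _ _ hab hcd, div_sub_div _ _ (mul_ne_zero hab hcd) h]
  congr 1
  ring

variable [LinearOrder 𝕜] [IsStrictOrderedRing 𝕜]

theorem weighted_div_sub_le_sub_weighted_div {a b c d l : 𝕜} (hl₀ : 0 ≤ l) (hl₁ : l ≤ 1)
    (hab : 0 < l * a + (1 - l) * b) (hcd : 0 < l * c + (1 - l) * d)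
    (h : 0 < l * (a - c) + (1 - l) * (b - d)) :
    (a - c) * (b - d) / (l * (a - c) + (1 - l) * (b - d)) ≤
      a * b / (l * a + (1 - l) * b) - c * d / (l * c + (1 - l) * d) := by
  have hl : 0 ≤ 1 - l := sub_nonneg.mpr hl₁
  rw [← sub_nonneg, weighted_div_sub_weighted_div_sub_weighted_div a b c d l hab.ne' hcd.ne' h.ne']
  positivity

theorem weighted_add_pos {a b l : 𝕜} (hl₀ : 0 ≤ l) (hl₁ : l ≤ 1) (ha : 0 < a) (hb : 0 < b) :
    0 < l * a + (1 - l) * b := by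
  rcases hl₀.lt_or_eq with hl | rfl
  · have : 0 ≤ (1 - l) * b := mul_nonneg (sub_nonneg.mpr hl₁) hb.le
    have : 0 < l * a := mul_pos hl ha
    linarith
  · simpa using hb

end WeightedMean

section HarmonicConcavity

variable {n : ℕ} {h f g : (Fin n → ℝ) → ℝ} {x₁ x₃ : Fin n → ℝ} {l : ℝ}

theorem HCfun_of_pos (hD : 0 < l * h x₁ + (1 - l) * h x₃) :
    HCfun h x₁ x₃ l =
      h ((1 - l) • x₁ + l • x₃) - h x₁ * h x₃ / (l * h x₁ + (1 - l) * h x₃) := by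
  rw [HCfun, if_pos hD]

theorem HCfun_of_eq_zero (h₁ : h x₁ = 0) (h₃ : h x₃ = 0) :
    HCfun h x₁ x₃ l = h ((1 - l) • x₁ + l • x₃) := by
  simp [HCfun, h₁, h₃]

theorem HCfun_sub_le_HCfun_sub (hl₀ : 0 ≤ l) (hl₁ : l ≤ 1) (hg₁ : 0 < g x₁) (hg₃ : 0 < g x₃)
    (hdom : HCdom (fun x => f x - g x) x₁ x₃ l) :
    HCfun f x₁ x₃ l - HCfun g x₁ x₃ l ≤ HCfun (fun x => f x - g x) x₁ x₃ l := by
  have hDg : 0 < l * g x₁ + (1 - l) * g x₃ := weighted_add_pos hl₀ hl₁ hg₁ hg₃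
  rcases hdom with hD | ⟨hfg₁, hfg₃⟩
  · have hDf : 0 < l * f x₁ + (1 - l) * f x₃ := by linarith
    rw [HCfun_of_pos hDf, HCfun_of_pos hDg, HCfun_of_pos hD]
    linarith [weighted_div_sub_le_sub_weighted_div hl₀ hl₁ hDf hDg hD]
  · have hf₁ : f x₁ = g x₁ := sub_eq_zero.mp hfg₁
    have hf₃ : f x₃ = g x₃ := sub_eq_zero.mp hfg₃
    have hDf : 0 < l * f x₁ + (1 - l) * f x₃ := by rwa [hf₁, hf₃]
    rw [HCfun_of_pos hDf, HCfun_of_pos hDg, HCfun_of_eq_zero hfg₁ hfg₃, hf₁, hf₃]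
    linarith

end HarmonicConcavity

theorem HC_sub_ge_general {n : ℕ} (K : Set (Fin n → ℝ))
    (f g : (Fin n → ℝ) → ℝ) (hgpos : ∀ x ∈ K, 0 < g x) :
    (∀ x₁ ∈ K, ∀ x₃ ∈ K, ∀ l : ℝ, 0 ≤ l → l ≤ 1 →
        HCdom (fun x => f x - g x) x₁ x₃ l →
        HCfun f x₁ x₃ l - HCfun g x₁ x₃ l ≤ HCfun (fun x => f x - g x) x₁ x₃ l) ∧
    ((∀ x₁ ∈ K, ∀ x₃ ∈ K, ∀ l : ℝ, 0 ≤ l → l ≤ 1 → HCfun g x₁ x₃ l ≤ 0) →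
      ∀ x₁ ∈ K, ∀ x₃ ∈ K, ∀ l : ℝ, 0 ≤ l → l ≤ 1 →
        HCdom (fun x => f x - g x) x₁ x₃ l →
        HCfun f x₁ x₃ l ≤ HCfun (fun x => f x - g x) x₁ x₃ l) := by
  have hsub : ∀ x₁ ∈ K, ∀ x₃ ∈ K, ∀ l : ℝ, 0 ≤ l → l ≤ 1 →
      HCdom (fun x => f x - g x) x₁ x₃ l →
      HCfun f x₁ x₃ l - HCfun g x₁ x₃ l ≤ HCfun (fun x => f x - g x) x₁ x₃ l :=
    fun x₁ hx₁ x₃ hx₃ _ hl₀ hl₁ ↦ HCfun_sub_le_HCfun_sub hl₀ hl₁ (hgpos x₁ hx₁) (hgpos x₃ hx₃)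
  refine ⟨hsub, fun hHCg x₁ hx₁ x₃ hx₃ l hl₀ hl₁ hdom ↦ ?_⟩
  linarith [hsub x₁ hx₁ x₃ hx₃ l hl₀ hl₁ hdom, hHCg x₁ hx₁ x₃ hx₃ l hl₀ hl₁]

/-- If `g > 0` on the convex set `K`, then on the domain of
`HC_{f-g}` one has `HC_{f-g} ≥ HC_f - HC_g`; in particular if `HC_g ≤ 0`
everywhere then `HC_{f-g} ≥ HC_f`. -/
theorem HC_sub_ge {n : ℕ} (K : Set (Fin n → ℝ)) (hK : Convex ℝ K)
    (f g : (Fin n → ℝ) → ℝ) (hgpos : ∀ x ∈ K, 0 < g x) :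
    (∀ x₁ ∈ K, ∀ x₃ ∈ K, ∀ l : ℝ, 0 ≤ l → l ≤ 1 →
        HCdom (fun x => f x - g x) x₁ x₃ l →
        HCfun f x₁ x₃ l - HCfun g x₁ x₃ l ≤ HCfun (fun x => f x - g x) x₁ x₃ l) ∧
    ((∀ x₁ ∈ K, ∀ x₃ ∈ K, ∀ l : ℝ, 0 ≤ l → l ≤ 1 → HCfun g x₁ x₃ l ≤ 0) →
      ∀ x₁ ∈ K, ∀ x₃ ∈ K, ∀ l : ℝ, 0 ≤ l → l ≤ 1 →
        HCdom (fun x => f x - g x) x₁ x₃ l →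
        HCfun f x₁ x₃ l ≤ HCfun (fun x => f x - g x) x₁ x₃ l) :=
  HC_sub_ge_general K f g hgpos
end

section
/- If u : K → (0,∞) is a positive function on a convex set K and u is harmonic concave (i.e., 1/u is convex), then for every constant k ≥ 0 the function u − k is harmonic concave, in the sense that HC_{u−k} ≥ 0 on the domain of HC_{u−k}. -/
/-!
The pointwise quantity `a c / (l a + (1 - l) c)` (a weighted harmonic mean of `a` and `c`) drops by at
least `k` when `k ≥ 0` is subtracted from `a` and `c`: after clearing the positive denominators, the
gap is exactly `k l (1 - l) (a - c)²`. Hence `HC_u ≥ 0` at `(x₁, x₃, l)` forces `HC_{u-k} ≥ 0` there.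
The degenerate part of the domain, `u x₁ = u x₃ = k`, reduces both quantities to `u x₂ - k`.
-/

open Set

theorem weighted_harmonic_mean_sub_const_le {a c k l : ℝ} (hk : 0 ≤ k) (hl : l ∈ Icc (0 : ℝ) 1)
    (hpos : 0 < l * (a - k) + (1 - l) * (c - k)) :
    (a - k) * (c - k) / (l * (a - k) + (1 - l) * (c - k)) ≤
      a * c / (l * a + (1 - l) * c) - k := by
  obtain ⟨hl₀, hl₁⟩ := hl
  have hD : 0 < l * a + (1 - l) * c := by linarith
  have gap : (a * c - k * (l * a + (1 - l) * c)) * (l * (a - k) + (1 - l) * (c - k)) -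
      (a - k) * (c - k) * (l * a + (1 - l) * c) = k * (l * (1 - l) * (a - c) ^ 2) := by ring
  have gap_nonneg : 0 ≤ k * (l * (1 - l) * (a - c) ^ 2) := by
    have : 0 ≤ 1 - l := by linarith
    positivity
  rw [div_sub' hD.ne', div_le_div_iff₀ hpos hD]
  linarith

theorem HCfun_eq_of_apply_eq {n : ℕ} {h : (Fin n → ℝ) → ℝ} {x₁ x₃ : Fin n → ℝ} {k l : ℝ}
    (hk : 0 ≤ k) (h₁ : h x₁ = k) (h₃ : h x₃ = k) :
    HCfun h x₁ x₃ l = h ((1 - l) • x₁ + l • x₃) - k := by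
  have hmean : l * k + (1 - l) * k = k := by ring
  rw [HCfun, h₁, h₃, hmean]
  split_ifs with hk₀
  · field_simp
  · rw [le_antisymm (not_lt.mp hk₀) hk, sub_zero]

theorem HCfun_sub_const_nonneg {n : ℕ} {u : (Fin n → ℝ) → ℝ} {x₁ x₃ : Fin n → ℝ} {k l : ℝ}
    (hk : 0 ≤ k) (hl : l ∈ Icc (0 : ℝ) 1) (hu : 0 ≤ HCfun u x₁ x₃ l)
    (hdom : HCdom (fun x => u x - k) x₁ x₃ l) :
    0 ≤ HCfun (fun x => u x - k) x₁ x₃ l := by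
  rcases hdom with hpos | ⟨h₁, h₃⟩
  · have hD : 0 < l * u x₁ + (1 - l) * u x₃ := by linarith
    rw [HCfun, if_pos hD] at hu
    rw [HCfun, if_pos hpos]
    linarith [weighted_harmonic_mean_sub_const_le hk hl hpos]
  · rw [HCfun_eq_of_apply_eq hk (sub_eq_zero.mp h₁) (sub_eq_zero.mp h₃)] at hu
    rw [HCfun_eq_of_apply_eq le_rfl h₁ h₃, sub_zero]
    exact hu

theorem HC_sub_const_nonneg_general {n : ℕ} (K : Set (Fin n → ℝ))
    (u : (Fin n → ℝ) → ℝ)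
    (hhc : ∀ x₁ ∈ K, ∀ x₃ ∈ K, ∀ l ∈ Set.Icc (0:ℝ) 1, 0 ≤ HCfun u x₁ x₃ l)
    (k : ℝ) (hk : 0 ≤ k) :
    ∀ x₁ ∈ K, ∀ x₃ ∈ K, ∀ l ∈ Set.Icc (0:ℝ) 1,
      HCdom (fun x => u x - k) x₁ x₃ l → 0 ≤ HCfun (fun x => u x - k) x₁ x₃ l :=
  fun x₁ hx₁ x₃ hx₃ l hl => HCfun_sub_const_nonneg hk hl (hhc x₁ hx₁ x₃ hx₃ l hl)

/-- If `u > 0` is harmonic concave on a convex set `K`, then for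
every constant `k ≥ 0` the function `u - k` is harmonic concave on the domain of
its harmonic concavity function. -/
theorem HC_sub_const_nonneg {n : ℕ} (K : Set (Fin n → ℝ)) (hK : Convex ℝ K)
    (u : (Fin n → ℝ) → ℝ) (hu : ∀ x ∈ K, 0 < u x)
    (hhc : ∀ x₁ ∈ K, ∀ x₃ ∈ K, ∀ l ∈ Set.Icc (0:ℝ) 1, 0 ≤ HCfun u x₁ x₃ l)
    (k : ℝ) (hk : 0 ≤ k) :
    ∀ x₁ ∈ K, ∀ x₃ ∈ K, ∀ l ∈ Set.Icc (0:ℝ) 1,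
      HCdom (fun x => u x - k) x₁ x₃ l → 0 ≤ HCfun (fun x => u x - k) x₁ x₃ l :=
  HC_sub_const_nonneg_general K u hhc k hk
end

section
/- Let K be a convex set and f, g : K → ℝ. For all x₁, x₃ ∈ K and λ ∈ [0,1], with x₂ = λx₃ + (1−λ)x₁, the concavity function of the product satisfies C_{fg}(x₁,x₃,λ) ≥ C_g(x₁,x₃,λ)·f(x₂) − osc(f)·(λ|g(x₃)| + (1−λ)|g(x₁)|), where osc(f) = sup f − inf f. In particular, if f is nonnegative and bounded and g is concave and bounded, then C_{fg}(x₁,x₃,λ) ≥ −‖g‖_∞ · osc(f). -/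
/-- The concavity function `C_h(x₁,x₃,λ) = h(x₂) - λ h(x₃) - (1-λ) h(x₁)`. -/
def Cfun {n : ℕ} (h : (Fin n → ℝ) → ℝ) (x₁ x₃ : Fin n → ℝ) (l : ℝ) : ℝ :=
  h ((1 - l) • x₁ + l • x₃) - l * h x₃ - (1 - l) * h x₁

/-- The oscillation `sup f - inf f` of `f` over `K`. -/
noncomputable def oscOn {n : ℕ} (K : Set (Fin n → ℝ)) (f : (Fin n → ℝ) → ℝ) : ℝ :=
  sSup (f '' K) - sInf (f '' K)

/-!
Writing `x₂ = (1-λ)x₁ + λx₃`, the concavity function of a product splits as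
`C_{fg} = C_g · f(x₂) + λ g(x₃)(f(x₂) - f(x₃)) + (1-λ) g(x₁)(f(x₂) - f(x₁))`,
and each difference of values of `f` on `K` is at most `osc(f)` in absolute value.
For `f ≥ 0` and `g` concave the first term is nonnegative, and the weights of the
error term average `|g|` to at most `‖g‖_∞`.
-/

section

variable {n : ℕ}

theorem Cfun_mul (f g : (Fin n → ℝ) → ℝ) (x₁ x₃ : Fin n → ℝ) (l : ℝ) :
    Cfun (fun x => f x * g x) x₁ x₃ l =
      Cfun g x₁ x₃ l * f ((1 - l) • x₁ + l • x₃)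
        + l * g x₃ * (f ((1 - l) • x₁ + l • x₃) - f x₃)
        + (1 - l) * g x₁ * (f ((1 - l) • x₁ + l • x₃) - f x₁) := by
  simp only [Cfun]
  ring

theorem Cfun_nonneg_of_concaveOn {K : Set (Fin n → ℝ)} {g : (Fin n → ℝ) → ℝ}
    (hg : ConcaveOn ℝ K g) {x₁ x₃ : Fin n → ℝ} (hx₁ : x₁ ∈ K) (hx₃ : x₃ ∈ K)
    {l : ℝ} (hl0 : 0 ≤ l) (hl1 : l ≤ 1) : 0 ≤ Cfun g x₁ x₃ l := by
  have := hg.2 hx₁ hx₃ (sub_nonneg.mpr hl1) hl0 (sub_add_cancel 1 l)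
  simp only [Cfun, smul_eq_mul] at this ⊢
  linarith

theorem abs_sub_le_oscOn {K : Set (Fin n → ℝ)} {f : (Fin n → ℝ) → ℝ}
    (hbddA : BddAbove (f '' K)) (hbddB : BddBelow (f '' K))
    {a b : Fin n → ℝ} (ha : a ∈ K) (hb : b ∈ K) : |f a - f b| ≤ oscOn K f := by
  have hsup : ∀ x ∈ K, f x ≤ sSup (f '' K) := fun x hx => le_csSup hbddA ⟨x, hx, rfl⟩
  have hinf : ∀ x ∈ K, sInf (f '' K) ≤ f x := fun x hx => csInf_le hbddB ⟨x, hx, rfl⟩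
  rw [abs_sub_le_iff, oscOn]
  constructor <;> linarith [hsup a ha, hsup b hb, hinf a ha, hinf b hb]

end

theorem neg_mul_abs_le_mul_mul {w a d c : ℝ} (hw : 0 ≤ w) (hd : |d| ≤ c) :
    -(c * (w * |a|)) ≤ w * a * d := by
  have had : -(|a| * c) ≤ a * d :=
    (neg_le_neg (abs_mul a d ▸ mul_le_mul_of_nonneg_left hd (abs_nonneg a))).trans
      (neg_abs_le _)
  linarith [mul_le_mul_of_nonneg_left had hw]

/-- `C_{fg} ≥ C_g · f(x₂) - osc(f)·(λ|g(x₃)| + (1-λ)|g(x₁)|)`; in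
particular, if `f` is nonnegative and `g` is concave with `|g| ≤ Mg`, then
`C_{fg} ≥ -Mg · osc(f)`. -/
theorem concavity_function_product {n : ℕ} (K : Set (Fin n → ℝ)) (hK : Convex ℝ K)
    (f g : (Fin n → ℝ) → ℝ)
    (hbddA : BddAbove (f '' K)) (hbddB : BddBelow (f '' K))
    (x₁ x₃ : Fin n → ℝ) (hx₁ : x₁ ∈ K) (hx₃ : x₃ ∈ K)
    (l : ℝ) (hl0 : 0 ≤ l) (hl1 : l ≤ 1) :
    (Cfun g x₁ x₃ l * f ((1 - l) • x₁ + l • x₃) -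
        oscOn K f * (l * |g x₃| + (1 - l) * |g x₁|) ≤
      Cfun (fun x => f x * g x) x₁ x₃ l) ∧
    ((∀ x ∈ K, 0 ≤ f x) → ConcaveOn ℝ K g →
      ∀ Mg : ℝ, (∀ x ∈ K, |g x| ≤ Mg) →
        -(Mg * oscOn K f) ≤ Cfun (fun x => f x * g x) x₁ x₃ l) := by
  have hx₂ : (1 - l) • x₁ + l • x₃ ∈ K :=
    hK hx₁ hx₃ (sub_nonneg.mpr hl1) hl0 (sub_add_cancel 1 l)
  have hl1' : 0 ≤ 1 - l := sub_nonneg.mpr hl1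
  have main : Cfun g x₁ x₃ l * f ((1 - l) • x₁ + l • x₃) -
      oscOn K f * (l * |g x₃| + (1 - l) * |g x₁|) ≤
      Cfun (fun x => f x * g x) x₁ x₃ l := by
    rw [Cfun_mul]
    linarith [neg_mul_abs_le_mul_mul (a := g x₃) hl0 (abs_sub_le_oscOn hbddA hbddB hx₂ hx₃),
      neg_mul_abs_le_mul_mul (a := g x₁) hl1' (abs_sub_le_oscOn hbddA hbddB hx₂ hx₁)]
  refine ⟨main, fun hf hg Mg hMg => ?_⟩
  have hosc : 0 ≤ oscOn K f := (abs_nonneg _).trans (abs_sub_le_oscOn hbddA hbddB hx₁ hx₁)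
  have hweights : l * |g x₃| + (1 - l) * |g x₁| ≤ Mg := by
    linarith [mul_le_mul_of_nonneg_left (hMg x₃ hx₃) hl0,
      mul_le_mul_of_nonneg_left (hMg x₁ hx₁) hl1']
  linarith [mul_nonneg (Cfun_nonneg_of_concaveOn hg hx₁ hx₃ hl0 hl1) (hf _ hx₂),
    mul_le_mul_of_nonneg_left hweights hosc]
end

section
/- Hyers–Ulam stability of concavity: let K ⊂ ℝ^n be convex and f : K → ℝ be δ-concave, i.e., C_f(x₁,x₃,λ) ≥ −δ for all x₁,x₃ ∈ K, λ ∈ [0,1]. Then there exists a concave function g : K → ℝ with ‖f − g‖_{L^∞(K)} ≤ k_n δ, where k_n > 0 depends only on n. -/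
/-!
Let `g` be the concave envelope of `f`: the fiberwise supremum of the convex hull of the graph
of `f` over `K`. It is concave and lies above `f`. By Carathéodory, every point `(x, y)` of that
hull is a positive convex combination of at most `n + 2` points of the graph, and iterating
`δ`-concavity along such a combination shows `y ≤ f x + (n + 1) δ`.
-/

open Finset

variable {E : Type*} [AddCommGroup E] [Module ℝ E]

def IsApproxConcaveOn (δ : ℝ) (K : Set E) (f : E → ℝ) : Prop :=
  ∀ x₁ ∈ K, ∀ x₃ ∈ K, ∀ l ∈ Set.Icc (0:ℝ) 1,
    -δ ≤ f ((1 - l) • x₁ + l • x₃) - l * f x₃ - (1 - l) * f x₁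

noncomputable def concaveEnvelope (K : Set E) (f : E → ℝ) (x : E) : ℝ :=
  sSup {y | (x, y) ∈ convexHull ℝ (K.graphOn f)}

theorem concaveOn_sSup_fiber {H : Set (E × ℝ)} (hH : Convex ℝ H) {K : Set E} (hK : Convex ℝ K)
    (hne : ∀ x ∈ K, {y | (x, y) ∈ H}.Nonempty) (hbdd : ∀ x ∈ K, BddAbove {y | (x, y) ∈ H}) :
    ConcaveOn ℝ K fun x ↦ sSup {y | (x, y) ∈ H} := by
  refine ⟨hK, fun x hx x' hx' a b ha hb hab ↦ ?_⟩
  rw [← Real.sSup_smul_of_nonneg ha, ← Real.sSup_smul_of_nonneg hb,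
    ← csSup_add ((hne x hx).smul_set) ((hbdd x hx).smul_of_nonneg ha) ((hne x' hx').smul_set)
      ((hbdd x' hx').smul_of_nonneg hb)]
  refine csSup_le_csSup (hbdd _ (hK hx hx' ha hb hab))
    (((hne x hx).smul_set).add ((hne x' hx').smul_set)) ?_
  rintro _ ⟨_, ⟨y, hy, rfl⟩, _, ⟨y', hy', rfl⟩, rfl⟩
  simpa using hH hy hy' ha hb hab

theorem mem_convexHull_graphOn {K : Set E} {f : E → ℝ} {x : E} (hx : x ∈ K) :
    (x, f x) ∈ convexHull ℝ (K.graphOn f) :=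
  subset_convexHull ℝ _ (Set.mem_graphOn.2 ⟨hx, rfl⟩)

namespace IsApproxConcaveOn

variable {δ : ℝ} {K : Set E} {f : E → ℝ}

theorem sum_mul_le_mul_centerMass {ι : Type*} (hf : IsApproxConcaveOn δ K f) (hK : Convex ℝ K)
    (hδ : 0 ≤ δ) {w : ι → ℝ} {z : ι → E} {t : Finset ι} (ht : t.Nonempty)
    (hw : ∀ i ∈ t, 0 < w i) (hz : ∀ i ∈ t, z i ∈ K) :
    ∑ i ∈ t, w i * f (z i) ≤ (∑ i ∈ t, w i) * (f (t.centerMass w z) + (#t - 1) * δ) := by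
  classical
  induction ht using Finset.Nonempty.cons_induction with
  | singleton a => simp [centerMass_singleton _ _ (hw a (mem_singleton_self a)).ne']
  | cons a s ha hs ih =>
    simp only [forall_mem_cons] at hw hz
    set W := ∑ i ∈ s, w i
    set M := w a + W
    set c := s.centerMass w z
    have hW : 0 < W := sum_pos hw.2 hs
    have hM : 0 < M := add_pos hw.1 hW
    have hc : c ∈ K := hK.centerMass_mem (fun i hi ↦ (hw.2 i hi).le) hW hz.2
    have hcm : (cons a s ha).centerMass w z = (w a / M) • z a + (W / M) • c := by
      rw [cons_eq_insert, centerMass_insert _ _ _ ha hW.ne']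
    have hmix := hf (z a) hz.1 c hc (W / M)
      ⟨by positivity, (div_le_one hM).2 (by linarith [hw.1])⟩
    rw [show 1 - W / M = w a / M by field_simp; ring, ← hcm] at hmix
    have key : W * f c + w a * f (z a) ≤ M * (f ((cons a s ha).centerMass w z) + δ) := by
      field_simp at hmix
      linarith
    have hgap : W * ((#s - 1) * δ) ≤ M * ((#s - 1) * δ) := by
      have hs1 : (1 : ℝ) ≤ #s := by exact_mod_cast hs.card_pos
      exact mul_le_mul_of_nonneg_right (by linarith [hw.1]) (mul_nonneg (by linarith) hδ)
    rw [sum_cons, sum_cons, card_cons, Nat.cast_succ, add_sub_cancel_right]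
    calc w a * f (z a) + ∑ i ∈ s, w i * f (z i)
        ≤ w a * f (z a) + W * (f c + (#s - 1) * δ) := by gcongr; exact ih hw.2 hz.2
      _ ≤ M * (f ((cons a s ha).centerMass w z) + δ) + M * ((#s - 1) * δ) := by linarith
      _ = M * (f ((cons a s ha).centerMass w z) + #s * δ) := by ring

theorem le_add_of_mem_convexHull_graphOn [FiniteDimensional ℝ E] (hf : IsApproxConcaveOn δ K f)
    (hK : Convex ℝ K) (hδ : 0 ≤ δ) {x : E} {y : ℝ} (hxy : (x, y) ∈ convexHull ℝ (K.graphOn f)) :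
    y ≤ f x + (Module.finrank ℝ E + 1) * δ := by
  obtain ⟨ι, _, z, w, hz, hind, hw, hw1, hzx⟩ := eq_pos_convex_span_of_mem_convexHull hxy
  have hgraph : ∀ i, (z i).1 ∈ K ∧ f (z i).1 = (z i).2 := fun i ↦ Set.mem_graphOn.1 (hz ⟨i, rfl⟩)
  have hcard : (Fintype.card ι : ℝ) ≤ Module.finrank ℝ E + 2 := by
    have := hind.card_le_finrank_succ.trans
      (Nat.succ_le_succ (Submodule.finrank_le (vectorSpan ℝ (Set.range z))))
    rw [Module.finrank_prod, Module.finrank_self] at this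
    exact_mod_cast this
  have hne : (univ : Finset ι).Nonempty := by
    by_contra h
    simp [not_nonempty_iff_eq_empty.1 h] at hw1
  have hx : ∑ i, w i • (z i).1 = x := by simpa [Prod.fst_sum] using congrArg Prod.fst hzx
  have hy : ∑ i, w i * f (z i).1 = y := by
    simpa [Prod.snd_sum, (hgraph _).2] using congrArg Prod.snd hzx
  have := hf.sum_mul_le_mul_centerMass hK hδ hne (fun i _ ↦ hw i) (fun i _ ↦ (hgraph i).1)
  rw [hw1, centerMass_eq_of_sum_1 _ _ hw1, hx, hy, one_mul, card_univ] at this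
  linarith [mul_le_mul_of_nonneg_right hcard hδ]

theorem bddAbove_fiber_convexHull_graphOn [FiniteDimensional ℝ E]
    (hf : IsApproxConcaveOn δ K f) (hK : Convex ℝ K) (hδ : 0 ≤ δ) (x : E) :
    BddAbove {y | (x, y) ∈ convexHull ℝ (K.graphOn f)} :=
  ⟨_, fun _ hy ↦ hf.le_add_of_mem_convexHull_graphOn hK hδ hy⟩

theorem concaveOn_concaveEnvelope [FiniteDimensional ℝ E] (hf : IsApproxConcaveOn δ K f)
    (hK : Convex ℝ K) (hδ : 0 ≤ δ) : ConcaveOn ℝ K (concaveEnvelope K f) :=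
  concaveOn_sSup_fiber (convex_convexHull ℝ _) hK (fun x hx ↦ ⟨f x, mem_convexHull_graphOn hx⟩)
    (fun x _ ↦ hf.bddAbove_fiber_convexHull_graphOn hK hδ x)

theorem le_concaveEnvelope [FiniteDimensional ℝ E] (hf : IsApproxConcaveOn δ K f)
    (hK : Convex ℝ K) (hδ : 0 ≤ δ) {x : E} (hx : x ∈ K) : f x ≤ concaveEnvelope K f x :=
  le_csSup (hf.bddAbove_fiber_convexHull_graphOn hK hδ x) (mem_convexHull_graphOn hx)

theorem concaveEnvelope_le [FiniteDimensional ℝ E] (hf : IsApproxConcaveOn δ K f)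
    (hK : Convex ℝ K) (hδ : 0 ≤ δ) {x : E} (hx : x ∈ K) :
    concaveEnvelope K f x ≤ f x + (Module.finrank ℝ E + 1) * δ :=
  csSup_le ⟨f x, mem_convexHull_graphOn hx⟩ fun _ hy ↦ hf.le_add_of_mem_convexHull_graphOn hK hδ hy

end IsApproxConcaveOn

/-- Hyers–Ulam stability of concavity. There is a constant
`k_n > 0` depending only on the dimension `n` such that: every `δ`-concave
function `f` on a convex set `K ⊆ ℝⁿ` lies within `k_n·δ` (in sup norm on `K`)
of some concave function `g`. -/
theorem hyers_ulam_concavity {n : ℕ} :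
    ∃ k : ℝ, 0 < k ∧
      ∀ (K : Set (Fin n → ℝ)), Convex ℝ K →
        ∀ (f : (Fin n → ℝ) → ℝ) (δ : ℝ), 0 ≤ δ →
          (∀ x₁ ∈ K, ∀ x₃ ∈ K, ∀ l ∈ Set.Icc (0:ℝ) 1,
            -δ ≤ f ((1 - l) • x₁ + l • x₃) - l * f x₃ - (1 - l) * f x₁) →
          ∃ g : (Fin n → ℝ) → ℝ, ConcaveOn ℝ K g ∧ ∀ x ∈ K, |f x - g x| ≤ k * δ := by
  refine ⟨n + 1, by positivity, fun K hK f δ hδ hf ↦ ?_⟩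
  replace hf : IsApproxConcaveOn δ K f := hf
  refine ⟨concaveEnvelope K f, hf.concaveOn_concaveEnvelope hK hδ, fun x hx ↦ ?_⟩
  have hlow := hf.le_concaveEnvelope hK hδ hx
  have hhigh := hf.concaveEnvelope_le hK hδ hx
  rw [Module.finrank_fin_fun] at hhigh
  rw [abs_sub_comm, abs_of_nonneg (sub_nonneg.2 hlow)]
  linarith
end

section
/- Key quadratic-form lemma in the concavity maximum principle: suppose real numbers Q₁, Q₂, Q₃ and λ ∈ (0,1) satisfy αs² + 2βsr + γr² ≥ 0 for all s,r ∈ ℝ, where α = (1−λ)²Q₂ − (1−λ)Q₁, β = λ(1−λ)Q₂, γ = λ²Q₂ − λQ₃. Then either (1−λ)Q₃ + λQ₁ < 0 and Q₂ ≥ Q₁Q₃/((1−λ)Q₃ + λQ₁), or Q₁ = Q₃ = 0 and Q₂ ≥ 0. -/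
/-!
Write `u = λ((1-λ)Q₂ - Q₁)`, `v = (1-λ)(λQ₂ - Q₃)` and `w = λ(1-λ)Q₂`. Then `w = β` and `uv = αγ`,
so positive semidefiniteness says `u, v ≥ 0` and `w² ≤ uv`. Moreover
`(1-λ)Q₃ + λQ₁ = 2w - u - v` and `λ(1-λ)(Q₁Q₃ - Q₂((1-λ)Q₃ + λQ₁)) = uv - w²`. If `2w - u - v < 0`
the second identity is the harmonic-mean bound; otherwise `w² ≤ uv` and `u + v ≤ 2w` is the
equality case of AM-GM, forcing `u = v = w`, i.e. `Q₁ = Q₃ = 0`.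
-/

theorem nonneg_and_sq_le_of_forall_quadratic_nonneg {α β γ : ℝ}
    (h : ∀ s r : ℝ, 0 ≤ α * s ^ 2 + 2 * β * s * r + γ * r ^ 2) :
    0 ≤ α ∧ 0 ≤ γ ∧ β ^ 2 ≤ α * γ := by
  refine ⟨by simpa using h 1 0, by simpa using h 0 1, ?_⟩
  have hdiscrim : discrim α (2 * β) γ ≤ 0 :=
    discrim_le_zero fun x => by simpa [sq, mul_assoc] using h x 1
  rw [discrim] at hdiscrim
  linarith

theorem eq_and_eq_of_sq_le_mul_of_add_le_two_mul {R : Type*} [CommRing R] [LinearOrder R]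
    [IsStrictOrderedRing R] {u v w : R} (hu : 0 ≤ u) (hv : 0 ≤ v) (hmul : w ^ 2 ≤ u * v)
    (hadd : u + v ≤ 2 * w) : u = w ∧ v = w := by
  have huv : u = v := by nlinarith [sq_nonneg (u - v)]
  subst huv
  have hw : u ≤ w := by linarith
  exact ⟨le_antisymm hw (by nlinarith), le_antisymm hw (by nlinarith)⟩

/-- Key quadratic-form lemma in the concavity maximum principle:
if `λ ∈ (0,1)` and the quadratic form with coefficients
`α = (1-λ)²Q₂ - (1-λ)Q₁`, `β = λ(1-λ)Q₂`, `γ = λ²Q₂ - λQ₃` is positive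
semidefinite, then either `(1-λ)Q₃ + λQ₁ < 0` and
`Q₂ ≥ Q₁Q₃/((1-λ)Q₃ + λQ₁)`, or `Q₁ = Q₃ = 0` and `Q₂ ≥ 0`. -/
theorem quadratic_form_lemma (Q₁ Q₂ Q₃ l : ℝ) (hl0 : 0 < l) (hl1 : l < 1)
    (hpsd : ∀ s r : ℝ,
      0 ≤ ((1 - l) ^ 2 * Q₂ - (1 - l) * Q₁) * s ^ 2 +
          2 * (l * (1 - l) * Q₂) * s * r + (l ^ 2 * Q₂ - l * Q₃) * r ^ 2) :
    ((1 - l) * Q₃ + l * Q₁ < 0 ∧ Q₁ * Q₃ / ((1 - l) * Q₃ + l * Q₁) ≤ Q₂) ∨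
      (Q₁ = 0 ∧ Q₃ = 0 ∧ 0 ≤ Q₂) := by
  have hl1' : 0 < 1 - l := sub_pos.mpr hl1
  obtain ⟨hα, hγ, hβ⟩ := nonneg_and_sq_le_of_forall_quadratic_nonneg hpsd
  set u := l * ((1 - l) * Q₂ - Q₁)
  set v := (1 - l) * (l * Q₂ - Q₃)
  set w := l * (1 - l) * Q₂
  have hu : 0 ≤ u := by nlinarith
  have hv : 0 ≤ v := by nlinarith
  have hmul : w ^ 2 ≤ u * v := by linear_combination hβ
  by_cases hD : (1 - l) * Q₃ + l * Q₁ < 0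
  · refine .inl ⟨hD, (div_le_iff_of_neg hD).mpr ?_⟩
    have : l * (1 - l) * (Q₂ * ((1 - l) * Q₃ + l * Q₁)) ≤ l * (1 - l) * (Q₁ * Q₃) := by
      linear_combination hmul
    linarith [le_of_mul_le_mul_left this (mul_pos hl0 hl1')]
  · obtain ⟨huw, hvw⟩ := eq_and_eq_of_sq_le_mul_of_add_le_two_mul hu hv hmul (by linarith)
    have hQ₁ : l * Q₁ = 0 := by linear_combination -huw
    have hQ₃ : (1 - l) * Q₃ = 0 := by linear_combination -hvw
    have hw : 0 ≤ w := huw ▸ hu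
    exact .inr ⟨(mul_eq_zero.mp hQ₁).resolve_left hl0.ne',
      (mul_eq_zero.mp hQ₃).resolve_left hl1'.ne',
      (mul_nonneg_iff_of_pos_left (mul_pos hl0 hl1')).mp hw⟩
end
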